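/- Let 0 < μ, ρ > 0, ‖T*T‖ ≤ e^{−1}, and let x† = (T*T)^μ w with ‖w‖ ≤ ρ (Hölder source condition). If μ ≤ 1, then for every σ with 0 < σ < μ there exist a function α : (0,∞) → (0,∞), a constant C > 0 and δ̄ > 0 such that for every δ ∈ (0,δ̄] and every y^δ ∈ Y with ‖y^δ − T x†‖ ≤ δ, the regularized solution x^δ_{α(δ)} = g_{α(δ)}(T*T)T*y^δ satisfies ‖x† − x^δ_{α(δ)}‖ ≤ C·δ^{2σ/(2σ+1)}. If μ > 1, there exist such α, C, δ̄ with ‖x† − x^δ_{α(δ)}‖ ≤ C·δ^{2/3}. -/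

import Mathlib

/-!
With `r_α(λ) = 1 - g_α(λ) λ`, the error splits into a bias and a noise term:
`x† - g_α(T*T) T* y^δ = r_α(T*T) (T*T)^μ w - g_α(T*T) T* (y^δ - T x†)`.
Since `1 - λ^{√α} ≤ √α log(1/λ)`, the residual satisfies
`r_α(λ) ≤ min(1, α log²(1/λ) / λ) ≤ (α log²(1/λ) / λ)^θ` for `θ ≤ 1`, and `λ^{μ-θ} log^{2θ}(1/λ)`
is bounded for `θ < μ`, so the bias is `O(α^θ)`. For `λ ≤ e⁻¹` we have `1 - λ^{√α} ≥ √α / e`,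
hence `λ g_α(λ)² ≤ e² / (4α)` and the noise term is at most `e δ / (2√α)`.
Choosing `α = δ^{2/(2θ+1)}` gives the rate `δ^{2θ/(2θ+1)}`, with `θ = σ` if `μ ≤ 1` and `θ = 1`
if `μ > 1`.
-/

open ContinuousLinearMap

/-- The generator function `g_α(λ) = 1/(λ + (1 − λ^{√α})²)` with `g_α(0) = 1`,
where `λ^{√α} = exp(√α · log λ)`. -/
noncomputable def genFun (α : ℝ) : ℝ → ℝ := fun t =>
  if t = 0 then 1 else 1 / (t + (1 - Real.exp (Real.sqrt α * Real.log t)) ^ 2)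

open Real

lemma genFun_of_nonneg {α t : ℝ} (hα : 0 < α) (ht : 0 ≤ t) :
    genFun α t = 1 / (t + (1 - t ^ √α) ^ 2) := by
  rcases ht.eq_or_lt with rfl | ht
  · simp [genFun, zero_rpow (sqrt_pos.2 hα).ne']
  · simp [genFun, ht.ne', rpow_def_of_pos ht, mul_comm]

lemma genFun_continuousOn {α : ℝ} (hα : 0 < α) : ContinuousOn (genFun α) (Set.Ici 0) := by
  refine ContinuousOn.congr ?_ fun t ht => genFun_of_nonneg hα ht
  have hpow : Continuous fun t : ℝ => t ^ √α := continuous_rpow_const (sqrt_nonneg α)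
  refine continuousOn_const.div (by fun_prop) fun t ht => ?_
  rcases (Set.mem_Ici.1 ht).eq_or_lt with rfl | ht
  · simp [zero_rpow (sqrt_pos.2 hα).ne']
  · positivity

lemma div_exp_one_le_one_sub_rpow {s t : ℝ} (hs0 : 0 ≤ s) (hs1 : s ≤ 1) (ht0 : 0 ≤ t)
    (ht1 : t ≤ exp (-1)) : s / exp 1 ≤ 1 - t ^ s := by
  have hts : t ^ s ≤ exp (-s) := by
    simpa [← exp_mul] using rpow_le_rpow ht0 ht1 hs0
  have hexp : exp (-1) ≤ exp (-s) := exp_le_exp.2 (by linarith)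
  -- `(1 + s) e^{-s} ≤ e^s e^{-s} = 1`
  have hmul : s * exp (-s) ≤ 1 - exp (-s) := by
    have hs := add_one_le_exp s
    have hinv : exp s * exp (-s) = 1 := by rw [← exp_add]; simp
    nlinarith [exp_pos (-s)]
  calc s / exp 1 = s * exp (-1) := by rw [exp_neg, div_eq_mul_inv]
    _ ≤ s * exp (-s) := mul_le_mul_of_nonneg_left hexp hs0
    _ ≤ 1 - t ^ s := by linarith

lemma mul_genFun_sq_le {α t : ℝ} (hα0 : 0 < α) (hα1 : α ≤ 1) (ht0 : 0 ≤ t)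
    (ht1 : t ≤ exp (-1)) : t * genFun α t ^ 2 ≤ (exp 1 / (2 * √α)) ^ 2 := by
  have hc : 0 < √α / exp 1 := by positivity
  have hu : √α / exp 1 ≤ 1 - t ^ √α :=
    div_exp_one_le_one_sub_rpow (sqrt_nonneg α) (sqrt_le_one.2 hα1) ht0 ht1
  have hu0 : 0 < 1 - t ^ √α := hc.trans_le hu
  set u := 1 - t ^ √α
  rw [genFun_of_nonneg hα0 ht0]
  calc t * (1 / (t + u ^ 2)) ^ 2 ≤ 1 / (2 * u) ^ 2 := by
        rw [div_pow, one_pow, mul_one_div, div_le_div_iff₀ (by positivity) (by positivity)]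
        nlinarith [sq_nonneg (t - u ^ 2)]
    _ ≤ 1 / (2 * (√α / exp 1)) ^ 2 := by gcongr
    _ = (exp 1 / (2 * √α)) ^ 2 := by field_simp

lemma rpow_mul_log_inv_rpow_le {x a b : ℝ} (hx0 : 0 < x) (hx1 : x ≤ 1) (ha : 0 < a)
    (hb : 0 < b) : x ^ a * log x⁻¹ ^ b ≤ (b / a) ^ b := by
  have hlog : log x⁻¹ ≤ b / a * x⁻¹ ^ (a / b) := by
    convert log_le_rpow_div (inv_nonneg.2 hx0.le) (div_pos ha hb) using 1
    field_simp
  have hpow : log x⁻¹ ^ b ≤ (b / a) ^ b * x⁻¹ ^ a := by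
    calc log x⁻¹ ^ b ≤ (b / a * x⁻¹ ^ (a / b)) ^ b :=
          rpow_le_rpow (log_nonneg (one_le_inv₀ hx0 |>.2 hx1)) hlog hb.le
      _ = (b / a) ^ b * x⁻¹ ^ a := by
          rw [mul_rpow (by positivity) (by positivity), ← rpow_mul (by positivity),
            div_mul_cancel₀ _ hb.ne']
  calc x ^ a * log x⁻¹ ^ b ≤ x ^ a * ((b / a) ^ b * x⁻¹ ^ a) := by gcongr
    _ = (b / a) ^ b := by
        rw [inv_rpow hx0.le, mul_left_comm, mul_inv_cancel₀ (by positivity), mul_one]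

lemma abs_one_sub_genFun_mul_mul_rpow_le {α μ θ t : ℝ} (hα : 0 < α) (hθ0 : 0 < θ)
    (hθ1 : θ ≤ 1) (hθμ : θ < μ) (ht0 : 0 ≤ t) (ht1 : t ≤ 1) :
    |(1 - genFun α t * t) * t ^ μ| ≤ (2 * θ / (μ - θ)) ^ (2 * θ) * α ^ θ := by
  rcases ht0.eq_or_lt with rfl | ht
  · rw [zero_rpow (by linarith), mul_zero, abs_zero]
    positivity
  set L := log t⁻¹
  set u := 1 - t ^ √α
  have hL : 0 ≤ L := log_nonneg (one_le_inv₀ ht |>.2 ht1)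
  have hu0 : 0 ≤ u := sub_nonneg.2 (rpow_le_one ht0 ht1 (sqrt_nonneg α))
  have huL : u ≤ √α * L := by
    have hexp := add_one_le_exp (log t * √α)
    rw [← rpow_def_of_pos ht] at hexp
    simp only [u, L, log_inv]
    linarith
  have hr : 1 - genFun α t * t = u ^ 2 / (t + u ^ 2) := by
    rw [genFun_of_nonneg hα ht0]
    field_simp
    ring
  have hr1 : u ^ 2 / (t + u ^ 2) ≤ 1 := div_le_one_of_le₀ (by linarith) (by positivity)
  have hrθ : u ^ 2 / (t + u ^ 2) ≤ (α * L ^ 2 / t) ^ θ :=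
    calc u ^ 2 / (t + u ^ 2) ≤ (u ^ 2 / (t + u ^ 2)) ^ θ :=
          self_le_rpow_of_le_one (by positivity) hr1 hθ1
      _ ≤ (α * L ^ 2 / t) ^ θ := by
          gcongr ?_ ^ θ
          calc u ^ 2 / (t + u ^ 2) ≤ u ^ 2 / t := by gcongr; linarith [sq_nonneg u]
            _ ≤ (√α * L) ^ 2 / t := by gcongr
            _ = α * L ^ 2 / t := by rw [mul_pow, sq_sqrt hα.le]
  have hsplit : (α * L ^ 2 / t) ^ θ * t ^ μ = α ^ θ * (t ^ (μ - θ) * L ^ (2 * θ)) := by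
    rw [div_rpow (by positivity) ht0, mul_rpow hα.le (by positivity), rpow_sub ht,
      ← rpow_natCast, ← rpow_mul hL]
    push_cast
    ring
  rw [hr, abs_of_nonneg (by positivity)]
  calc u ^ 2 / (t + u ^ 2) * t ^ μ ≤ (α * L ^ 2 / t) ^ θ * t ^ μ := by gcongr
    _ = α ^ θ * (t ^ (μ - θ) * L ^ (2 * θ)) := hsplit
    _ ≤ α ^ θ * (2 * θ / (μ - θ)) ^ (2 * θ) := by
        gcongr
        exact rpow_mul_log_inv_rpow_le ht ht1 (by linarith) (by linarith)
    _ = _ := mul_comm _ _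

section HilbertSpace

variable {X Y : Type*} [NormedAddCommGroup X] [InnerProductSpace ℂ X] [CompleteSpace X]
  [NormedAddCommGroup Y] [InnerProductSpace ℂ Y] [CompleteSpace Y]

lemma spectrum_adjoint_comp_self_subset_Icc (T : X →L[ℂ] Y) :
    spectrum ℝ (adjoint T ∘L T) ⊆ Set.Icc 0 ‖adjoint T ∘L T‖ := by
  have hA : 0 ≤ adjoint T ∘L T := (nonneg_iff_isPositive _).2 T.isPositive_adjoint_comp_self
  have hle := (CStarAlgebra.norm_le_iff_le_algebraMap _ (norm_nonneg _) hA).1 le_rfl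
  exact fun t ht =>
    ⟨spectrum_nonneg_of_nonneg hA ht, (le_algebraMap_iff_spectrum_le hA.isSelfAdjoint).1 hle t ht⟩

lemma sub_cfc_apply_adjoint_eq (T : X →L[ℂ] Y) {φ g : ℝ → ℝ}
    (hφ : ContinuousOn φ (spectrum ℝ (adjoint T ∘L T)))
    (hg : ContinuousOn g (spectrum ℝ (adjoint T ∘L T))) (w : X) (y : Y) :
    cfc φ (adjoint T ∘L T) w - cfc g (adjoint T ∘L T) (adjoint T y) =
      cfc (fun t => (1 - g t * t) * φ t) (adjoint T ∘L T) w -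
        (cfc g (adjoint T ∘L T) ∘L adjoint T) (y - T (cfc φ (adjoint T ∘L T) w)) := by
  have hA : IsSelfAdjoint (adjoint T ∘L T) := T.isPositive_adjoint_comp_self.isSelfAdjoint
  rw [cfc_mul (fun t => 1 - g t * t) φ _ (by fun_prop) hφ,
    cfc_sub (fun _ => 1) (fun t => g t * t) _ (by fun_prop) (by fun_prop), cfc_const_one ℝ _,
    cfc_mul g (fun t => t) _ hg continuousOn_id, cfc_id' ℝ _]
  simp only [sub_mul, one_mul, sub_apply, mul_apply_eq_comp, comp_apply, map_sub]
  abel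

lemma norm_cfc_comp_adjoint_le (T : X →L[ℂ] Y) {g : ℝ → ℝ}
    (hg : ContinuousOn g (spectrum ℝ (adjoint T ∘L T))) {M : ℝ} (hM : 0 ≤ M)
    (h : ∀ t ∈ spectrum ℝ (adjoint T ∘L T), t * g t ^ 2 ≤ M ^ 2) :
    ‖cfc g (adjoint T ∘L T) ∘L adjoint T‖ ≤ M := by
  set A := adjoint T ∘L T
  set S := cfc g A ∘L adjoint T
  have hA : IsSelfAdjoint A := T.isPositive_adjoint_comp_self.isSelfAdjoint
  have hS : S ∘L adjoint S = cfc (fun t => g t * t * g t) A := by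
    have hgA : adjoint (cfc g A) = cfc g A := by
      rw [← star_eq_adjoint]; exact IsSelfAdjoint.cfc
    rw [cfc_mul (fun t => g t * t) g A (by fun_prop) hg,
      cfc_mul g (fun t => t) A hg continuousOn_id, cfc_id' ℝ A]
    simp only [S, adjoint_comp, adjoint_adjoint, hgA]
    rfl
  have hSS : ‖S‖ * ‖S‖ ≤ M * M := by
    have hnorm := norm_adjoint_comp_self (adjoint S)
    rw [adjoint_adjoint, LinearIsometryEquiv.norm_map, hS] at hnorm
    rw [← hnorm]
    refine norm_cfc_le (by positivity) fun t ht => ?_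
    have ht0 := (spectrum_adjoint_comp_self_subset_Icc T ht).1
    have hgt : g t * t * g t = t * g t ^ 2 := by ring
    rw [hgt, Real.norm_eq_abs, abs_of_nonneg (by positivity)]
    nlinarith [h t ht]
  exact (mul_self_le_mul_self_iff (norm_nonneg _) hM).2 hSS

theorem norm_sub_cfc_genFun_le (T : X →L[ℂ] Y) (hT : ‖adjoint T ∘L T‖ ≤ exp (-1))
    {μ θ ρ : ℝ} (hθ0 : 0 < θ) (hθ1 : θ ≤ 1) (hθμ : θ < μ) {w : X} (hw : ‖w‖ ≤ ρ)
    {α δ : ℝ} (hα0 : 0 < α) (hα1 : α ≤ 1) {y : Y}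
    (hy : ‖y - T (cfc (fun t : ℝ => t ^ μ) (adjoint T ∘L T) w)‖ ≤ δ) :
    ‖cfc (fun t : ℝ => t ^ μ) (adjoint T ∘L T) w - cfc (genFun α) (adjoint T ∘L T) (adjoint T y)‖
      ≤ (2 * θ / (μ - θ)) ^ (2 * θ) * α ^ θ * ρ + exp 1 / (2 * √α) * δ := by
  have hspec : ∀ t ∈ spectrum ℝ (adjoint T ∘L T), 0 ≤ t ∧ t ≤ exp (-1) := fun t ht =>
    have h := spectrum_adjoint_comp_self_subset_Icc T ht
    ⟨h.1, h.2.trans hT⟩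
  have hφ : ContinuousOn (fun t : ℝ => t ^ μ) (spectrum ℝ (adjoint T ∘L T)) :=
    (continuous_rpow_const (by linarith)).continuousOn
  have hg : ContinuousOn (genFun α) (spectrum ℝ (adjoint T ∘L T)) :=
    (genFun_continuousOn hα0).mono fun t ht => (hspec t ht).1
  have hbias : ‖cfc (fun t => (1 - genFun α t * t) * t ^ μ) (adjoint T ∘L T)‖
      ≤ (2 * θ / (μ - θ)) ^ (2 * θ) * α ^ θ :=
    norm_cfc_le (by positivity) fun t ht =>
      abs_one_sub_genFun_mul_mul_rpow_le hα0 hθ0 hθ1 hθμ (hspec t ht).1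
        ((hspec t ht).2.trans (exp_le_one_iff.2 (by norm_num)))
  have hnoise : ‖cfc (genFun α) (adjoint T ∘L T) ∘L adjoint T‖ ≤ exp 1 / (2 * √α) :=
    norm_cfc_comp_adjoint_le T hg (by positivity) fun t ht =>
      mul_genFun_sq_le hα0 hα1 (hspec t ht).1 (hspec t ht).2
  rw [sub_cfc_apply_adjoint_eq T hφ hg]
  refine (norm_sub_le _ _).trans (add_le_add ?_ ?_)
  · exact (le_opNorm _ _).trans (mul_le_mul hbias hw (norm_nonneg _) (by positivity))
  · exact (le_opNorm _ _).trans (mul_le_mul hnoise hy (norm_nonneg _) (by positivity))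

theorem exists_paramChoice_norm_sub_cfc_genFun_le (T : X →L[ℂ] Y)
    (hT : ‖adjoint T ∘L T‖ ≤ exp (-1)) {μ θ ρ : ℝ} (hθ0 : 0 < θ) (hθ1 : θ ≤ 1) (hθμ : θ < μ)
    {w : X} (hw : ‖w‖ ≤ ρ) :
    ∃ αfun : ℝ → ℝ, (∀ δ > (0 : ℝ), 0 < αfun δ) ∧
      ∃ C > (0 : ℝ), ∃ δbar > (0 : ℝ), ∀ δ ∈ Set.Ioc (0 : ℝ) δbar, ∀ y : Y,
        ‖y - T (cfc (fun t : ℝ => t ^ μ) (adjoint T ∘L T) w)‖ ≤ δ →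
        ‖cfc (fun t : ℝ => t ^ μ) (adjoint T ∘L T) w -
            cfc (genFun (αfun δ)) (adjoint T ∘L T) (adjoint T y)‖ ≤
          C * δ ^ (2 * θ / (2 * θ + 1)) := by
  have hρ : 0 ≤ ρ := (norm_nonneg w).trans hw
  refine ⟨fun δ => δ ^ (2 / (2 * θ + 1)), fun δ hδ => rpow_pos_of_pos hδ _,
    (2 * θ / (μ - θ)) ^ (2 * θ) * ρ + exp 1 / 2, by positivity, 1, one_pos,
    fun δ ⟨hδ0, hδ1⟩ y hy => ?_⟩
  -- `α = δ ^ (2 / (2θ + 1))` balances the bias `α ^ θ` against the noise `δ / √α`.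
  have hbias : (δ ^ (2 / (2 * θ + 1))) ^ θ = δ ^ (2 * θ / (2 * θ + 1)) := by
    rw [← rpow_mul hδ0.le]
    ring_nf
  have hnoise : δ / √(δ ^ (2 / (2 * θ + 1))) = δ ^ (2 * θ / (2 * θ + 1)) := by
    rw [sqrt_eq_rpow, ← rpow_mul hδ0.le]
    nth_rewrite 1 [← rpow_one δ]
    rw [← rpow_sub hδ0]
    congr 1
    field_simp
    ring
  calc _ ≤ (2 * θ / (μ - θ)) ^ (2 * θ) * (δ ^ (2 / (2 * θ + 1))) ^ θ * ρ +
        exp 1 / (2 * √(δ ^ (2 / (2 * θ + 1)))) * δ :=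
        norm_sub_cfc_genFun_le T hT hθ0 hθ1 hθμ hw (rpow_pos_of_pos hδ0 _)
          (rpow_le_one hδ0.le hδ1 (by positivity)) hy
    _ = _ := by
        rw [hbias, ← hnoise]
        ring

end HilbertSpace

theorem stmt16_general {X Y : Type*} [NormedAddCommGroup X] [InnerProductSpace ℂ X]
    [CompleteSpace X] [NormedAddCommGroup Y] [InnerProductSpace ℂ Y] [CompleteSpace Y]
    (T : X →L[ℂ] Y)
    (hTnorm : ‖(adjoint T) ∘L T‖ ≤ Real.exp (-1))
    (μ ρ : ℝ)
    (w : X) (hw : ‖w‖ ≤ ρ) (xdag : X)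
    (hxdag : xdag = cfc (fun t : ℝ => t ^ μ) ((adjoint T) ∘L T) w) :
    (μ ≤ 1 → ∀ σ : ℝ, 0 < σ → σ < μ →
      ∃ αfun : ℝ → ℝ, (∀ δ > (0 : ℝ), 0 < αfun δ) ∧
        ∃ C > (0 : ℝ), ∃ δbar > (0 : ℝ), ∀ δ ∈ Set.Ioc (0 : ℝ) δbar, ∀ yδ : Y,
          ‖yδ - T xdag‖ ≤ δ →
          ‖xdag - cfc (genFun (αfun δ)) ((adjoint T) ∘L T) ((adjoint T) yδ)‖ ≤
            C * δ ^ (2 * σ / (2 * σ + 1))) ∧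
    (1 < μ →
      ∃ αfun : ℝ → ℝ, (∀ δ > (0 : ℝ), 0 < αfun δ) ∧
        ∃ C > (0 : ℝ), ∃ δbar > (0 : ℝ), ∀ δ ∈ Set.Ioc (0 : ℝ) δbar, ∀ yδ : Y,
          ‖yδ - T xdag‖ ≤ δ →
          ‖xdag - cfc (genFun (αfun δ)) ((adjoint T) ∘L T) ((adjoint T) yδ)‖ ≤
            C * δ ^ ((2 : ℝ) / 3)) := by
  subst hxdag
  refine ⟨fun hμ1 σ hσ0 hσμ =>
    exists_paramChoice_norm_sub_cfc_genFun_le T hTnorm hσ0 (by linarith) hσμ hw, fun hμ1 => ?_⟩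
  simpa only [show (2 : ℝ) * 1 / (2 * 1 + 1) = 2 / 3 by norm_num] using
    exists_paramChoice_norm_sub_cfc_genFun_le T hTnorm one_pos le_rfl hμ1 hw

/-- Let `μ > 0`, `ρ > 0`, `‖T*T‖ ≤ e⁻¹`, and `x† = (T*T)^μ w` with `‖w‖ ≤ ρ`
(Hölder source condition), `T` a bounded injective operator between complex Hilbert
spaces. If `μ ≤ 1`, then for every `σ` with `0 < σ < μ` there exist an a-priori
parameter choice `α : (0,∞) → (0,∞)`, a constant `C > 0` and `δ̄ > 0` such that for
every `δ ∈ (0,δ̄]` and every `y^δ` with `‖y^δ − T x†‖ ≤ δ`, the regularized solution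
`x^δ_{α(δ)} = g_{α(δ)}(T*T)T*y^δ` satisfies `‖x† − x^δ_{α(δ)}‖ ≤ C·δ^{2σ/(2σ+1)}`.
If `μ > 1`, there exist such `α, C, δ̄` with `‖x† − x^δ_{α(δ)}‖ ≤ C·δ^{2/3}`. -/
theorem stmt16 {X Y : Type*} [NormedAddCommGroup X] [InnerProductSpace ℂ X]
    [CompleteSpace X] [NormedAddCommGroup Y] [InnerProductSpace ℂ Y] [CompleteSpace Y]
    (T : X →L[ℂ] Y) (hTinj : Function.Injective T)
    (hTnorm : ‖(adjoint T) ∘L T‖ ≤ Real.exp (-1))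
    (μ ρ : ℝ) (hμ : 0 < μ) (hρ : 0 < ρ)
    (w : X) (hw : ‖w‖ ≤ ρ) (xdag : X)
    (hxdag : xdag = cfc (fun t : ℝ => t ^ μ) ((adjoint T) ∘L T) w) :
    (μ ≤ 1 → ∀ σ : ℝ, 0 < σ → σ < μ →
      ∃ αfun : ℝ → ℝ, (∀ δ > (0 : ℝ), 0 < αfun δ) ∧
        ∃ C > (0 : ℝ), ∃ δbar > (0 : ℝ), ∀ δ ∈ Set.Ioc (0 : ℝ) δbar, ∀ yδ : Y,
          ‖yδ - T xdag‖ ≤ δ →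
          ‖xdag - cfc (genFun (αfun δ)) ((adjoint T) ∘L T) ((adjoint T) yδ)‖ ≤
            C * δ ^ (2 * σ / (2 * σ + 1))) ∧
    (1 < μ →
      ∃ αfun : ℝ → ℝ, (∀ δ > (0 : ℝ), 0 < αfun δ) ∧
        ∃ C > (0 : ℝ), ∃ δbar > (0 : ℝ), ∀ δ ∈ Set.Ioc (0 : ℝ) δbar, ∀ yδ : Y,
          ‖yδ - T xdag‖ ≤ δ →
          ‖xdag - cfc (genFun (αfun δ)) ((adjoint T) ∘L T) ((adjoint T) yδ)‖ ≤
            C * δ ^ ((2 : ℝ) / 3)) :=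
  stmt16_general T hTnorm μ ρ w hw xdag hxdag
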